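/- Let f : Ω → ℂ be nonvanishing and C². For any scalar C² function g : Ω → ℂ one has the identity (D - M^{Df/f})g = f·D(f⁻¹g); consequently the factorization of the Schrödinger operator can be written as (D + M^{Df/f})(f·D(f⁻¹g)) = (-Δ + Δf/f)g. In particular, if g solves -Δg + (Δf/f)g = 0 then the vector field F = f·D(f⁻¹g) solves (D + M^{Df/f})F = 0. -/

import Mathlib

noncomputable section

/-- ℝ³ -/
abbrev V3 := Fin 3 → ℝ
/-- Complex quaternions ℍ(ℂ) -/
abbrev HC := Quaternion ℂ

/-- partial derivative ∂ₖ of a function on ℝ³ -/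
noncomputable def pd {E : Type*} [NormedAddCommGroup E] [NormedSpace ℝ E]
    (k : Fin 3) (g : V3 → E) (x : V3) : E :=
  fderiv ℝ g x (Pi.single k 1)

noncomputable def grad {E : Type*} [NormedAddCommGroup E] [NormedSpace ℝ E]
    (g : V3 → E) (x : V3) : Fin 3 → E := fun k => pd k g x

noncomputable def dvg {E : Type*} [NormedAddCommGroup E] [NormedSpace ℝ E]
    (F : V3 → Fin 3 → E) (x : V3) : E :=
  pd 0 (fun y => F y 0) x + pd 1 (fun y => F y 1) x + pd 2 (fun y => F y 2) x

noncomputable def rot {E : Type*} [NormedAddCommGroup E] [NormedSpace ℝ E]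
    (F : V3 → Fin 3 → E) (x : V3) : Fin 3 → E :=
  ![pd 1 (fun y => F y 2) x - pd 2 (fun y => F y 1) x,
    pd 2 (fun y => F y 0) x - pd 0 (fun y => F y 2) x,
    pd 0 (fun y => F y 1) x - pd 1 (fun y => F y 0) x]

/-- scalar Laplacian -/
noncomputable def lapS {E : Type*} [NormedAddCommGroup E] [NormedSpace ℝ E]
    (g : V3 → E) (x : V3) : E :=
  pd 0 (pd 0 g) x + pd 1 (pd 1 g) x + pd 2 (pd 2 g) x

/-- purely vectorial quaternion from a ℂ³ vector -/
def vecq (v : Fin 3 → ℂ) : HC := ⟨0, v 0, v 1, v 2⟩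
/-- scalar quaternion -/
def scq (a : ℂ) : HC := ⟨a, 0, 0, 0⟩

def e1 : HC := ⟨0,1,0,0⟩
def e2 : HC := ⟨0,0,1,0⟩
def e3 : HC := ⟨0,0,0,1⟩

/-- vector part of a quaternion, as a ℂ³ vector -/
def vecPart (a : HC) : Fin 3 → ℂ := ![a.imI, a.imJ, a.imK]

/-- quaternionic conjugation C_H -/
def qconj (a : HC) : HC := ⟨a.re, -a.imI, -a.imJ, -a.imK⟩

/-- componentwise partial derivative of an ℍ(ℂ)-valued function -/
noncomputable def qpd (k : Fin 3) (F : V3 → HC) (x : V3) : HC :=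
  ⟨pd k (fun y => (F y).re) x, pd k (fun y => (F y).imI) x,
   pd k (fun y => (F y).imJ) x, pd k (fun y => (F y).imK) x⟩

/-- The Moisil–Teodorescu (Dirac) operator D = Σₖ iₖ∂ₖ -/
noncomputable def Dq (F : V3 → HC) (x : V3) : HC :=
  e1 * qpd 0 F x + e2 * qpd 1 F x + e3 * qpd 2 F x

/-- componentwise Laplacian of an ℍ(ℂ)-valued function -/
noncomputable def qlap (F : V3 → HC) (x : V3) : HC :=
  qpd 0 (qpd 0 F) x + qpd 1 (qpd 1 F) x + qpd 2 (qpd 2 F) x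

/-- ContDiffOn for ℍ(ℂ)-valued functions, componentwise -/
def QContDiffOn (n : ℕ∞) (F : V3 → HC) (s : Set V3) : Prop :=
  ContDiffOn ℝ n (fun x => (F x).re) s ∧ ContDiffOn ℝ n (fun x => (F x).imI) s ∧
  ContDiffOn ℝ n (fun x => (F x).imJ) s ∧ ContDiffOn ℝ n (fun x => (F x).imK) s

/-- euclidean norm on ℝ³ -/
noncomputable def nrm (x : V3) : ℝ := Real.sqrt (x 0 ^ 2 + x 1 ^ 2 + x 2 ^ 2)

/-- fundamental solution of the Helmholtz operator -/
noncomputable def theta (α : ℂ) (x : V3) : ℂ :=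
  -Complex.exp (Complex.I * α * (nrm x : ℂ)) / (4 * Real.pi * (nrm x : ℂ))

/-- x as a purely vectorial quaternion -/
def xq (x : V3) : HC := vecq fun k => ((x k : ℝ) : ℂ)

/-! Write `g = f u` with `u = g / f`; the product rule gives `∇g - g ∇f / f = f ∇u`. On a vector
field `D` acts as `-div + rot`, and the quaternion product of two vectors is `-a·b + a × b`.
Since `rot ∇u = 0`, the vector parts `∇f × ∇u` of `D(f ∇u)` and `∇u × ∇f` of `(f ∇u)(∇f / f)`
cancel, leaving the scalar `-(2 ∇f·∇u + f Δu)`, which is `-Δg + (Δf / f) g` by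
`Δ(f u) = u Δf + 2 ∇f·∇u + f Δu`. -/

open Filter Topology Matrix

section VectorCalculus

variable {E : Type*} [NormedAddCommGroup E] [NormedSpace ℝ E]

theorem Filter.EventuallyEq.pd {a b : V3 → E} {x : V3} (h : a =ᶠ[𝓝 x] b) (k : Fin 3) :
    pd k a =ᶠ[𝓝 x] pd k b :=
  (h.fderiv (𝕜 := ℝ)).mono fun y hy => by simp only [_root_.pd, hy]

theorem Filter.EventuallyEq.grad_eq {a b : V3 → E} {x : V3} (h : a =ᶠ[𝓝 x] b) :
    grad a x = grad b x :=
  funext fun k => (h.pd k).eq_of_nhds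

theorem Filter.EventuallyEq.lapS_eq {a b : V3 → E} {x : V3} (h : a =ᶠ[𝓝 x] b) :
    lapS a x = lapS b x := by
  have hpdpd (k : Fin 3) := ((h.pd k).pd k).eq_of_nhds
  simp only [lapS, hpdpd]

theorem pd_add {a b : V3 → E} {x : V3} (ha : DifferentiableAt ℝ a x)
    (hb : DifferentiableAt ℝ b x) (k : Fin 3) :
    pd k (fun y => a y + b y) x = pd k a x + pd k b x := by
  simp [pd, fderiv_fun_add ha hb]

theorem contDiffAt_pd {n : ℕ} {u : V3 → E} {x : V3} (hu : ContDiffAt ℝ (n + 1) u x)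
    (k : Fin 3) : ContDiffAt ℝ n (pd k u) x := by
  have h := hu.fderiv_right (m := n) le_rfl
  exact (ContinuousLinearMap.apply ℝ E (Pi.single k (1 : ℝ))).contDiff.contDiffAt.comp x h

theorem pd_pd_eq_fderiv_fderiv {u : V3 → E} {x : V3} (hu : ContDiffAt ℝ 2 u x) (i j : Fin 3) :
    pd i (pd j u) x = fderiv ℝ (fderiv ℝ u) x (Pi.single i 1) (Pi.single j 1) := by
  have hd : DifferentiableAt ℝ (fderiv ℝ u) x :=
    (hu.fderiv_right (m := 1) (by norm_num)).differentiableAt one_ne_zero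
  have : pd j u = ContinuousLinearMap.apply ℝ E (Pi.single j (1 : ℝ)) ∘ fderiv ℝ u := rfl
  rw [pd, this, fderiv_comp x (ContinuousLinearMap.differentiableAt _) hd]
  simp

theorem pd_comm {u : V3 → E} {x : V3} (hu : ContDiffAt ℝ 2 u x) (i j : Fin 3) :
    pd i (pd j u) x = pd j (pd i u) x := by
  rw [pd_pd_eq_fderiv_fderiv hu, pd_pd_eq_fderiv_fderiv hu, hu.isSymmSndFDerivAt (by simp)]

theorem rot_grad {u : V3 → E} {x : V3} (hu : ContDiffAt ℝ 2 u x) : rot (grad u) x = 0 := by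
  ext j
  fin_cases j <;> simp [rot, grad, pd_comm hu 1 2, pd_comm hu 2 0, pd_comm hu 0 1]

end VectorCalculus

section Product

variable {𝔸 : Type*} [NormedCommRing 𝔸] [NormedAlgebra ℝ 𝔸]

theorem pd_mul {a b : V3 → 𝔸} {x : V3} (ha : DifferentiableAt ℝ a x)
    (hb : DifferentiableAt ℝ b x) (k : Fin 3) :
    pd k (fun y => a y * b y) x = pd k a x * b x + a x * pd k b x := by
  simp [pd, fderiv_fun_mul ha hb]
  ring

theorem grad_mul {a b : V3 → 𝔸} {x : V3} (ha : DifferentiableAt ℝ a x)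
    (hb : DifferentiableAt ℝ b x) :
    grad (fun y => a y * b y) x = b x • grad a x + a x • grad b x := by
  ext k
  simp only [grad, pd_mul ha hb, Pi.add_apply, Pi.smul_apply, smul_eq_mul]
  ring

theorem lapS_mul {a b : V3 → 𝔸} {x : V3} (ha : ContDiffAt ℝ 2 a x) (hb : ContDiffAt ℝ 2 b x) :
    lapS (fun y => a y * b y) x =
      lapS a x * b x + 2 * (grad a x ⬝ᵥ grad b x) + a x * lapS b x := by
  have hd : ∀ {c : V3 → 𝔸} {y : V3}, ContDiffAt ℝ 2 c y → DifferentiableAt ℝ c y :=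
    fun hc => hc.differentiableAt (by norm_num)
  have hpd : ∀ {c : V3 → 𝔸}, ContDiffAt ℝ 2 c x → ∀ k, DifferentiableAt ℝ (pd k c) x :=
    fun hc k => (contDiffAt_pd (n := 1) hc k).differentiableAt one_ne_zero
  have hfirst : ∀ k, pd k (fun y => a y * b y) =ᶠ[𝓝 x]
      fun y => pd k a y * b y + a y * pd k b y := fun k => by
    filter_upwards [ha.eventually (by simp), hb.eventually (by simp)] with y hay hby
    exact pd_mul (hd hay) (hd hby) k
  have hsecond : ∀ k, pd k (pd k fun y => a y * b y) x =
      pd k (pd k a) x * b x + 2 * (pd k a x * pd k b x) + a x * pd k (pd k b) x := fun k => by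
    rw [((hfirst k).pd k).eq_of_nhds,
      pd_add (a := fun y => pd k a y * b y) (b := fun y => a y * pd k b y)
        ((hpd ha k).mul (hd hb)) ((hd ha).mul (hpd hb k)),
      pd_mul (hpd ha k) (hd hb), pd_mul (hd ha) (hpd hb k)]
    ring
  simp only [lapS, hsecond, dotProduct, Fin.sum_univ_three, grad]
  ring

theorem rot_smul {a : V3 → 𝔸} {G : V3 → Fin 3 → 𝔸} {x : V3} (ha : DifferentiableAt ℝ a x)
    (hG : DifferentiableAt ℝ G x) :
    rot (fun y => a y • G y) x = grad a x ⨯₃ G x + a x • rot G x := by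
  have hGj := differentiableAt_pi.1 hG
  ext j
  fin_cases j <;>
    simp [rot, cross_apply, grad, pd_mul ha (hGj 0), pd_mul ha (hGj 1), pd_mul ha (hGj 2)] <;>
    ring

theorem dvg_smul {a : V3 → 𝔸} {G : V3 → Fin 3 → 𝔸} {x : V3} (ha : DifferentiableAt ℝ a x)
    (hG : DifferentiableAt ℝ G x) :
    dvg (fun y => a y • G y) x = grad a x ⬝ᵥ G x + a x * dvg G x := by
  have hGj := differentiableAt_pi.1 hG
  simp [dvg, dotProduct, Fin.sum_univ_three, grad, pd_mul ha (hGj 0), pd_mul ha (hGj 1),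
    pd_mul ha (hGj 2)]
  ring

end Product

section Quaternion

theorem scq_mul_vecq (a : ℂ) (v : Fin 3 → ℂ) : scq a * vecq v = vecq (a • v) := by
  ext <;> simp [scq, vecq, ↓Quaternion.re_mul, ↓Quaternion.imI_mul, ↓Quaternion.imJ_mul,
    ↓Quaternion.imK_mul]

theorem vecq_mul_vecq (v w : Fin 3 → ℂ) :
    vecq v * vecq w = scq (-(v ⬝ᵥ w)) + vecq (v ⨯₃ w) := by
  ext <;>
    simp [scq, vecq, dotProduct, Fin.sum_univ_three, cross_apply, ↓Quaternion.re_mul,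
      ↓Quaternion.imI_mul, ↓Quaternion.imJ_mul, ↓Quaternion.imK_mul, ↓Quaternion.re_add,
      ↓Quaternion.imI_add, ↓Quaternion.imJ_add, ↓Quaternion.imK_add] <;>
    ring

theorem qpd_vecq (V : V3 → Fin 3 → ℂ) (k : Fin 3) (x : V3) :
    qpd k (fun y => vecq (V y)) x = vecq fun j => pd k (fun y => V y j) x := by
  ext <;> simp [qpd, vecq, pd]

theorem Dq_vecq (V : V3 → Fin 3 → ℂ) (x : V3) :
    Dq (fun y => vecq (V y)) x = scq (-dvg V x) + vecq (rot V x) := by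
  simp only [Dq, qpd_vecq]
  ext <;>
    simp [e1, e2, e3, scq, vecq, dvg, rot, ↓Quaternion.re_mul, ↓Quaternion.imI_mul,
      ↓Quaternion.imJ_mul, ↓Quaternion.imK_mul, ↓Quaternion.re_add, ↓Quaternion.imI_add,
      ↓Quaternion.imJ_add, ↓Quaternion.imK_add] <;>
    ring

end Quaternion

def logGrad (f : V3 → ℂ) (x : V3) : Fin 3 → ℂ := fun k => grad f x k / f x

theorem logGrad_eq_inv_smul (f : V3 → ℂ) (x : V3) : logGrad f x = (f x)⁻¹ • grad f x := by
  ext k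
  simp [logGrad, div_eq_inv_mul]

section Factorization

variable {f g u : V3 → ℂ} {x : V3}

theorem vecq_grad_sub_mul_logGrad (hfg : g =ᶠ[𝓝 x] fun y => f y * u y)
    (hf : DifferentiableAt ℝ f x) (hu : DifferentiableAt ℝ u x) (hfx : f x ≠ 0) :
    vecq (grad g x) - scq (g x) * vecq (logGrad f x) = scq (f x) * vecq (grad u x) := by
  rw [hfg.grad_eq, hfg.eq_of_nhds, grad_mul hf hu, logGrad_eq_inv_smul,
    scq_mul_vecq, scq_mul_vecq, smul_smul, mul_right_comm, mul_inv_cancel₀ hfx, one_mul]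
  ext <;> simp [vecq, ↓Quaternion.re_sub, ↓Quaternion.imI_sub, ↓Quaternion.imJ_sub,
    ↓Quaternion.imK_sub]

theorem Dq_smul_grad_add_mul_logGrad (hf : DifferentiableAt ℝ f x) (hu : ContDiffAt ℝ 2 u x)
    (hfx : f x ≠ 0) :
    Dq (fun y => scq (f y) * vecq (grad u y)) x + scq (f x) * vecq (grad u x) * vecq (logGrad f x)
      = scq (-(2 * (grad f x ⬝ᵥ grad u x) + f x * lapS u x)) := by
  have hgrad : DifferentiableAt ℝ (grad u) x := differentiableAt_pi.2 fun k =>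
    (contDiffAt_pd (n := 1) hu k).differentiableAt one_ne_zero
  have hD : Dq (fun y => scq (f y) * vecq (grad u y)) x =
      scq (-(grad f x ⬝ᵥ grad u x + f x * lapS u x)) + vecq (grad f x ⨯₃ grad u x) := by
    have hdvg : dvg (grad u) x = lapS u x := rfl
    simp only [scq_mul_vecq, Dq_vecq, dvg_smul hf hgrad, hdvg, rot_smul hf hgrad, rot_grad hu,
      smul_zero, add_zero]
  have hM : scq (f x) * vecq (grad u x) * vecq (logGrad f x) =
      scq (-(grad f x ⬝ᵥ grad u x)) + vecq (grad u x ⨯₃ grad f x) := by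
    rw [scq_mul_vecq, vecq_mul_vecq, logGrad_eq_inv_smul, smul_dotProduct, dotProduct_smul,
      LinearMap.map_smul₂, map_smul, smul_smul, smul_smul, mul_inv_cancel₀ hfx, one_smul, one_smul,
      dotProduct_comm]
  rw [hD, hM, ← cross_anticomm]
  ext <;> simp [scq, vecq, ↓Quaternion.re_add, ↓Quaternion.imI_add, ↓Quaternion.imJ_add,
    ↓Quaternion.imK_add]
  ring

theorem schrodinger_eq_of_eventuallyEq_mul (hfg : g =ᶠ[𝓝 x] fun y => f y * u y)
    (hf : ContDiffAt ℝ 2 f x) (hu : ContDiffAt ℝ 2 u x) (hfx : f x ≠ 0) :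
    -lapS g x + lapS f x / f x * g x = -(2 * (grad f x ⬝ᵥ grad u x) + f x * lapS u x) := by
  rw [hfg.lapS_eq, hfg.eq_of_nhds, lapS_mul hf hu]
  field_simp
  ring

end Factorization

/-- (D - M^{Df/f})g = f·D(f⁻¹g); the corresponding form of the
factorization of the Schrödinger operator; and if g solves the Schrödinger
equation then F = f·D(f⁻¹g) solves (D + M^{Df/f})F = 0. -/
theorem stmt12 (Ω : Set V3) (hΩ : IsOpen Ω) (f g : V3 → ℂ)
    (hf : ContDiffOn ℝ 2 f Ω) (hf0 : ∀ x ∈ Ω, f x ≠ 0)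
    (hg : ContDiffOn ℝ 2 g Ω) :
    (∀ x ∈ Ω,
      vecq (grad g x) - scq (g x) * vecq (fun k => grad f x k / f x)
        = scq (f x) * vecq (grad (fun y => g y / f y) x)) ∧
    (∀ x ∈ Ω,
      Dq (fun y => scq (f y) * vecq (grad (fun z => g z / f z) y)) x
        + (scq (f x) * vecq (grad (fun z => g z / f z) x))
            * vecq (fun k => grad f x k / f x)
      = scq (-lapS g x + (lapS f x / f x) * g x)) ∧
    ((∀ x ∈ Ω, -lapS g x + (lapS f x / f x) * g x = 0) →
      ∀ x ∈ Ω,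
        Dq (fun y => scq (f y) * vecq (grad (fun z => g z / f z) y)) x
          + (scq (f x) * vecq (grad (fun z => g z / f z) x))
              * vecq (fun k => grad f x k / f x) = 0) := by
  have hu : ContDiffOn ℝ 2 (fun y => g y / f y) Ω := by
    simpa only [div_eq_mul_inv] using hg.mul (hf.fun_inv hf0)
  have hfg : ∀ x ∈ Ω, g =ᶠ[𝓝 x] fun y => f y * (g y / f y) := fun x hx =>
    eventually_of_mem (hΩ.mem_nhds hx) fun y hy => (mul_div_cancel₀ _ (hf0 y hy)).symm
  have hfx : ∀ x ∈ Ω, ContDiffAt ℝ 2 f x := fun x hx => hf.contDiffAt (hΩ.mem_nhds hx)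
  have hux : ∀ x ∈ Ω, ContDiffAt ℝ 2 (fun y => g y / f y) x :=
    fun x hx => hu.contDiffAt (hΩ.mem_nhds hx)
  have factorization : ∀ x ∈ Ω,
      Dq (fun y => scq (f y) * vecq (grad (fun z => g z / f z) y)) x
        + (scq (f x) * vecq (grad (fun z => g z / f z) x)) * vecq (logGrad f x)
      = scq (-lapS g x + (lapS f x / f x) * g x) := fun x hx => by
    rw [Dq_smul_grad_add_mul_logGrad ((hfx x hx).differentiableAt two_ne_zero) (hux x hx)
      (hf0 x hx), schrodinger_eq_of_eventuallyEq_mul (hfg x hx) (hfx x hx) (hux x hx) (hf0 x hx)]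
  refine ⟨fun x hx => vecq_grad_sub_mul_logGrad (hfg x hx)
    ((hfx x hx).differentiableAt two_ne_zero) ((hux x hx).differentiableAt two_ne_zero) (hf0 x hx),
    factorization, fun hsol x hx => (factorization x hx).trans (by rw [hsol x hx]; rfl)⟩
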